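/- Let (R, E, [.,.], ρ, H) be an H-twisted Lie–Rinehart algebra and α : E → R an R-linear map (an E-1-form). Define Dα(ψ₀,ψ₁) = ρ(ψ₀)(α(ψ₁)) − ρ(ψ₁)(α(ψ₀)) − α([ψ₀,ψ₁]) and, for a scalar-valued alternating 2-form ω, Dω(ψ₀,ψ₁,ψ₂) = Σ_{i=0}^{2} (−1)^i ρ(ψ_i)(ω(…,ψ̂_i,…)) + Σ_{i<j} (−1)^{i+j} ω([ψ_i,ψ_j], ψ̂_i,ψ̂_j-omitted remaining argument). Then D(Dα)(ψ₀,ψ₁,ψ₂) = −α(H(ψ₀,ψ₁,ψ₂)) for all ψ₀,ψ₁,ψ₂ ∈ E. -/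

import Mathlib

/-! Expanding `D(Dα)` with the anchor property, every term involving a derivative of `α` cancels,
leaving `−α` applied to the Jacobiator of the bracket; the twisted Jacobi identity says that the
Jacobiator is `H`. -/

section ChevalleyEilenberg

variable {k R E : Type*} [CommRing k] [CommRing R] [Algebra k R] [AddCommGroup E] [Module R E]

def jacobiator (br : E → E → E) (φ ψ χ : E) : E :=
  br φ (br ψ χ) - br (br φ ψ) χ - br ψ (br φ χ)

def oneFormDiff (ρ : E →ₗ[R] Derivation k R R) (br : E → E → E) (α : E →ₗ[R] R)
    (ψ₀ ψ₁ : E) : R :=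
  ρ ψ₀ (α ψ₁) - ρ ψ₁ (α ψ₀) - α (br ψ₀ ψ₁)

def twoFormDiff (ρ : E →ₗ[R] Derivation k R R) (br : E → E → E) (ω : E → E → R)
    (ψ₀ ψ₁ ψ₂ : E) : R :=
  ρ ψ₀ (ω ψ₁ ψ₂) - ρ ψ₁ (ω ψ₀ ψ₂) + ρ ψ₂ (ω ψ₀ ψ₁)
    - ω (br ψ₀ ψ₁) ψ₂ + ω (br ψ₀ ψ₂) ψ₁ - ω (br ψ₁ ψ₂) ψ₀

theorem twoFormDiff_oneFormDiff (ρ : E →ₗ[R] Derivation k R R) (br : E → E → E)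
    (br_skew : ∀ φ ψ : E, br φ ψ = - br ψ φ)
    (anchor_br : ∀ φ ψ : E, ρ (br φ ψ) = ⁅ρ φ, ρ ψ⁆) (α : E →ₗ[R] R) (ψ₀ ψ₁ ψ₂ : E) :
    twoFormDiff ρ br (oneFormDiff ρ br α) ψ₀ ψ₁ ψ₂ = - α (jacobiator br ψ₀ ψ₁ ψ₂) := by
  have skew₀₂ : br (br ψ₀ ψ₂) ψ₁ = - br ψ₁ (br ψ₀ ψ₂) := br_skew _ _
  have skew₁₂ : br (br ψ₁ ψ₂) ψ₀ = - br ψ₀ (br ψ₁ ψ₂) := br_skew _ _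
  simp only [twoFormDiff, oneFormDiff, jacobiator, anchor_br, skew₀₂, skew₁₂,
    Derivation.commutator_apply, map_sub, map_neg]
  ring

end ChevalleyEilenberg

theorem d_squared_of_one_form_general
    {k R E : Type*} [Field k] [CommRing R] [Algebra k R]
    [AddCommGroup E] [Module R E]
    (ρ : E →ₗ[R] Derivation k R R)
    (br : E → E → E)
    (br_skew : ∀ φ ψ : E, br φ ψ = - br ψ φ)
    (H : E →ₗ[R] E →ₗ[R] E →ₗ[R] E)
    (jacobi : ∀ φ ψ₁ ψ₂ : E,
      br φ (br ψ₁ ψ₂) = br (br φ ψ₁) ψ₂ + br ψ₁ (br φ ψ₂) + H φ ψ₁ ψ₂)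
    (anchor_br : ∀ φ ψ : E, ρ (br φ ψ) = ⁅ρ φ, ρ ψ⁆)
    -- an E-1-form α and its differential Dα
    (α : E →ₗ[R] R)
    (Dα : E → E → R)
    (hDα : ∀ ψ₀ ψ₁ : E, Dα ψ₀ ψ₁ = ρ ψ₀ (α ψ₁) - ρ ψ₁ (α ψ₀) - α (br ψ₀ ψ₁))
    -- the second differential D(Dα)
    (DDα : E → E → E → R)
    (hDDα : ∀ ψ₀ ψ₁ ψ₂ : E, DDα ψ₀ ψ₁ ψ₂ =
      ρ ψ₀ (Dα ψ₁ ψ₂) - ρ ψ₁ (Dα ψ₀ ψ₂) + ρ ψ₂ (Dα ψ₀ ψ₁)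
        - Dα (br ψ₀ ψ₁) ψ₂ + Dα (br ψ₀ ψ₂) ψ₁ - Dα (br ψ₁ ψ₂) ψ₀) :
    ∀ ψ₀ ψ₁ ψ₂ : E, DDα ψ₀ ψ₁ ψ₂ = - α (H ψ₀ ψ₁ ψ₂) := by
  intro ψ₀ ψ₁ ψ₂
  have hDα' : Dα = oneFormDiff ρ br α := funext₂ hDα
  have jacobiator_eq : jacobiator br ψ₀ ψ₁ ψ₂ = H ψ₀ ψ₁ ψ₂ := by
    rw [jacobiator, jacobi]; abel
  rw [hDDα, hDα', ← jacobiator_eq, ← twoFormDiff_oneFormDiff ρ br br_skew anchor_br]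
  rfl

/-- For an `H`-twisted Lie–Rinehart algebra and an `E`-1-form `α : E → R`,
the square of the Chevalley–Eilenberg-type differential is given by insertion of `−H`:
`D(Dα)(ψ₀,ψ₁,ψ₂) = −α(H(ψ₀,ψ₁,ψ₂))`. -/
theorem d_squared_of_one_form
    {k R E : Type*} [Field k] [CommRing R] [Algebra k R]
    [AddCommGroup E] [Module k E] [Module R E] [IsScalarTower k R E]
    (ρ : E →ₗ[R] Derivation k R R)
    (br : E → E → E)
    (br_add_left : ∀ φ₁ φ₂ ψ : E, br (φ₁ + φ₂) ψ = br φ₁ ψ + br φ₂ ψ)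
    (br_smul_left : ∀ (a : k) (φ ψ : E), br (a • φ) ψ = a • br φ ψ)
    (br_skew : ∀ φ ψ : E, br φ ψ = - br ψ φ)
    (H : E →ₗ[R] E →ₗ[R] E →ₗ[R] E)
    (H_alt₁₂ : ∀ φ ψ : E, H φ φ ψ = 0)
    (H_alt₂₃ : ∀ φ ψ : E, H φ ψ ψ = 0)
    (H_ker : ∀ φ ψ χ : E, ρ (H φ ψ χ) = 0)
    (leibniz : ∀ (φ : E) (f : R) (ψ : E), br φ (f • ψ) = ρ φ f • ψ + f • br φ ψ)
    (jacobi : ∀ φ ψ₁ ψ₂ : E,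
      br φ (br ψ₁ ψ₂) = br (br φ ψ₁) ψ₂ + br ψ₁ (br φ ψ₂) + H φ ψ₁ ψ₂)
    (anchor_br : ∀ φ ψ : E, ρ (br φ ψ) = ⁅ρ φ, ρ ψ⁆)
    -- an E-1-form α and its differential Dα
    (α : E →ₗ[R] R)
    (Dα : E → E → R)
    (hDα : ∀ ψ₀ ψ₁ : E, Dα ψ₀ ψ₁ = ρ ψ₀ (α ψ₁) - ρ ψ₁ (α ψ₀) - α (br ψ₀ ψ₁))
    -- the second differential D(Dα)
    (DDα : E → E → E → R)
    (hDDα : ∀ ψ₀ ψ₁ ψ₂ : E, DDα ψ₀ ψ₁ ψ₂ =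
      ρ ψ₀ (Dα ψ₁ ψ₂) - ρ ψ₁ (Dα ψ₀ ψ₂) + ρ ψ₂ (Dα ψ₀ ψ₁)
        - Dα (br ψ₀ ψ₁) ψ₂ + Dα (br ψ₀ ψ₂) ψ₁ - Dα (br ψ₁ ψ₂) ψ₀) :
    ∀ ψ₀ ψ₁ ψ₂ : E, DDα ψ₀ ψ₁ ψ₂ = - α (H ψ₀ ψ₁ ψ₂) :=
  d_squared_of_one_form_general ρ br br_skew H jacobi anchor_br α Dα hDα DDα hDDα
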